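/- arXiv:1801.00237 — 2 statements merged into one kernel-verified Lean document; each statement's English description precedes it below -/
import Mathlib

section
/- For any constants f_p > 0, f_s > 0 with f_p + f_s < 1 and any integer β > 1, there exists an integer α ≥ β such that for all positive integers n and m with m ≥ αn, the following holds: partition m memory cells into n blocks of size ⌊m/n⌋; if at most f_p·n processors are faulty and at most f_s·m cells are faulty, then the number of processors that are operational and whose block contains at least one segment of length at most α beginning and ending at operational cells and containing exactly β operational cells is at least n·(1 - (f_p + f_s))/2. -/
open Finset in
private lemma sel {γ : Type*} [LinearOrder γ] (β : ℕ) (hβ : 0 < β) :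
    ∀ O : Finset γ, β ≤ O.card →
    ∃ b ∈ O, (O.filter (fun x => x ≤ b)).card = β := by
  classical
  intro O
  induction O using Finset.strongInductionOn with
  | _ O ih =>
    intro hcard
    have hne : O.Nonempty := Finset.card_pos.mp (lt_of_lt_of_le hβ hcard)
    rcases eq_or_lt_of_le hcard with h | h
    · refine ⟨O.max' hne, O.max'_mem hne, ?_⟩
      rw [Finset.filter_true_of_mem (fun x hx => O.le_max' x hx)]
      exact h.symm
    · set b := O.max' hne with hbdef
      have hb : b ∈ O := O.max'_mem hne
      obtain ⟨c, hc, hcc⟩ := ih (O.erase b) (Finset.erase_ssubset hb)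
        (by rw [Finset.card_erase_of_mem hb]; omega)
      have hcO : c ∈ O := Finset.mem_of_mem_erase hc
      have hcb : c ≠ b := (Finset.mem_erase.mp hc).1
      refine ⟨c, hcO, ?_⟩
      rw [← hcc]
      congr 1
      ext x
      simp only [Finset.mem_filter, Finset.mem_erase]
      constructor
      · rintro ⟨hx, hxc⟩
        refine ⟨⟨fun hxb => ?_, hx⟩, hxc⟩
        subst hxb
        exact hcb (le_antisymm (O.le_max' c hcO) hxc)
      · rintro ⟨⟨_, hx⟩, hxc⟩
        exact ⟨hx, hxc⟩

private lemma window_good {m : ℕ} (faultyC : Set (Fin m)) (β α s e : ℕ)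
    (hβ : 0 < β) (hlen : e ≤ s + α)
    (hcount : β ≤ {c : Fin m | s ≤ c.1 ∧ c.1 < e ∧ c ∉ faultyC}.ncard) :
    ∃ a b : Fin m, s ≤ a.1 ∧ b.1 < e ∧ a.1 ≤ b.1 ∧ b.1 + 1 - a.1 ≤ α ∧
      a ∉ faultyC ∧ b ∉ faultyC ∧
      {c : Fin m | a.1 ≤ c.1 ∧ c.1 ≤ b.1 ∧ c ∉ faultyC}.ncard = β := by
  classical
  set O : Finset (Fin m) := Finset.univ.filter (fun c => s ≤ c.1 ∧ c.1 < e ∧ c ∉ faultyC) with hO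
  have hOcard : {c : Fin m | s ≤ c.1 ∧ c.1 < e ∧ c ∉ faultyC}.ncard = O.card := by
    rw [Set.ncard_eq_toFinset_card']
    congr 1
    ext c; simp [hO]
  obtain ⟨b, hbO, hS⟩ := sel β hβ O (by rw [← hOcard]; exact hcount)
  set S := O.filter (fun x => x ≤ b) with hSdef
  have hSne : S.Nonempty := by
    rw [← Finset.card_pos, hS]; exact hβ
  set a := S.min' hSne with hadef
  have haS : a ∈ S := S.min'_mem hSne
  have haO : a ∈ O := (Finset.mem_filter.mp haS).1
  have hab : a.1 ≤ b.1 := (Finset.mem_filter.mp haS).2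
  simp only [hO, Finset.mem_filter, Finset.mem_univ, true_and] at haO hbO
  refine ⟨a, b, haO.1, hbO.2.1, hab, by omega, haO.2.2, hbO.2.2, ?_⟩
  rw [Set.ncard_eq_toFinset_card', ← hS]
  congr 1
  ext c
  simp only [Set.mem_toFinset, Set.mem_setOf_eq, hSdef, hO, Finset.mem_filter,
    Finset.mem_univ, true_and]
  constructor
  · rintro ⟨hac, hcb, hcf⟩
    exact ⟨⟨by omega, by omega, hcf⟩, hcb⟩
  · rintro ⟨⟨hsc, hce, hcf⟩, hcb⟩
    refine ⟨?_, hcb, hcf⟩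
    exact S.min'_le c (by
      simp only [hSdef, hO, Finset.mem_filter, Finset.mem_univ, true_and]
      exact ⟨⟨hsc, hce, hcf⟩, hcb⟩)


set_option maxHeartbeats 1000000 in
/-- Lemma 1: for any constants `f_p, f_s > 0` with `f_p + f_s < 1` and integer `β > 1`,
there is an integer `α ≥ β` such that on a PRAM with `n` processors and `m ≥ α·n` memory
cells (cells partitioned into `n` blocks of `⌊m/n⌋` cells), with at most `f_p·n` faulty
processors and at most `f_s·m` faulty cells, the number of `α`-`β`-active processors is at
least `n·(1 - (f_p + f_s))/2`. -/
theorem stmt0 (fp fs : ℝ) (hfp : 0 < fp) (hfs : 0 < fs) (hsum : fp + fs < 1)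
    (β : ℕ) (hβ : 1 < β) :
    ∃ α : ℕ, β ≤ α ∧
      ∀ n m : ℕ, 0 < n → 0 < m → α * n ≤ m →
      ∀ (faultyP : Set (Fin n)) (faultyC : Set (Fin m)),
        (faultyP.ncard : ℝ) ≤ fp * n →
        (faultyC.ncard : ℝ) ≤ fs * m →
        ((n : ℝ) * (1 - (fp + fs)) / 2) ≤
          ({i : Fin n | i ∉ faultyP ∧
            ∃ a b : Fin m,
              i.1 * (m / n) ≤ a.1 ∧ b.1 < i.1 * (m / n) + m / n ∧
              a.1 ≤ b.1 ∧ b.1 + 1 - a.1 ≤ α ∧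
              a ∉ faultyC ∧ b ∉ faultyC ∧
              ({c : Fin m | a.1 ≤ c.1 ∧ c.1 ≤ b.1 ∧ c ∉ faultyC}.ncard = β)}.ncard : ℝ) := by
  classical
  set δ : ℝ := 1 - (fp + fs) with hδdef
  have hδ : 0 < δ := by simp only [hδdef]; linarith
  have hδ1 : δ < 1 := by simp only [hδdef]; linarith
  have hfs1 : fs < 1 := by linarith
  obtain ⟨α', hα'⟩ := exists_nat_ge (4 * (β : ℝ) / δ)
  refine ⟨β + α', Nat.le_add_right _ _, ?_⟩
  set α := β + α' with hαdef
  have hαβ : β ≤ α := Nat.le_add_right _ _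
  have hαpos : 0 < α := lt_of_lt_of_le (by omega) hαβ
  have hαδ : 4 * (β : ℝ) ≤ (α : ℝ) * δ := by
    have h1 : (α' : ℝ) ≤ (α : ℝ) := by
      have : α' ≤ α := by omega
      exact_mod_cast this
    have := (div_le_iff₀ hδ).mp hα'
    nlinarith
  have hα4 : 4 * (β : ℝ) ≤ (α : ℝ) := by
    have hα0 : (0:ℝ) ≤ (α:ℝ) := Nat.cast_nonneg _
    nlinarith
  intro n m hn hm hmn faultyP faultyC hP hC
  set k := m / n with hk
  have hαk : α ≤ k := (Nat.le_div_iff_mul_le hn).mpr hmn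
  have hkpos : 0 < k := lt_of_lt_of_le hαpos hαk
  have hnk : n * k ≤ m := by
    rw [hk]
    calc n * (m / n) = m / n * n := Nat.mul_comm _ _
    _ ≤ m := Nat.div_mul_le_self m n
  have hmlt : m < n * (k + 1) := by
    rw [hk]
    have h1 := Nat.div_add_mod m n
    have h2 := Nat.mod_lt m hn
    nlinarith
  -- the goodness predicate
  set good : Fin n → Prop := fun i => ∃ a b : Fin m,
      i.1 * k ≤ a.1 ∧ b.1 < i.1 * k + k ∧ a.1 ≤ b.1 ∧ b.1 + 1 - a.1 ≤ α ∧
      a ∉ faultyC ∧ b ∉ faultyC ∧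
      ({c : Fin m | a.1 ≤ c.1 ∧ c.1 ≤ b.1 ∧ c ∉ faultyC}.ncard = β) with hgood
  -- blocks
  set block : Fin n → Finset (Fin m) := fun i =>
      Finset.univ.filter (fun c => i.1 * k ≤ c.1 ∧ c.1 < i.1 * k + k) with hblock
  have hblockcard : ∀ i : Fin n, (block i).card = k := by
    intro i
    have hle : i.1 * k + k ≤ m := by
      have h1 : (i.1 + 1) * k ≤ n * k := Nat.mul_le_mul_right k i.isLt
      nlinarith
    have himg : (block i).image Fin.val = Finset.Ico (i.1 * k) (i.1 * k + k) := by
      ext x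
      simp only [hblock, Finset.mem_image, Finset.mem_filter, Finset.mem_univ, true_and,
        Finset.mem_Ico]
      constructor
      · rintro ⟨c, ⟨h1, h2⟩, rfl⟩; exact ⟨h1, h2⟩
      · rintro ⟨h1, h2⟩; exact ⟨⟨x, by omega⟩, ⟨h1, h2⟩, rfl⟩
    have h2 := Finset.card_image_of_injective (block i) Fin.val_injective
    rw [himg, Nat.card_Ico] at h2
    omega
  set fB : Fin n → Finset (Fin m) := fun i => (block i).filter (fun c => c ∈ faultyC) with hfB
  set opB : Fin n → Finset (Fin m) := fun i => (block i).filter (fun c => c ∉ faultyC) with hopB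
  have hsplit : ∀ i : Fin n, (fB i).card + (opB i).card = k := by
    intro i
    rw [hfB, hopB, Finset.card_filter_add_card_filter_not, hblockcard]
  -- dormant processors have few operational cells
  have hdorm : ∀ i : Fin n, ¬ good i → (opB i).card ≤ (β - 1) * (k / α + 1) := by
    intro i hng
    have hwin : ∀ j : ℕ, ((opB i).filter
        (fun c => i.1 * k + j * α ≤ c.1 ∧ c.1 < i.1 * k + j * α + α)).card ≤ β - 1 := by
      intro j
      by_contra hcon
      push_neg at hcon
      apply hng
      have hcount : β ≤ {c : Fin m | i.1 * k + j * α ≤ c.1 ∧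
          c.1 < min (i.1 * k + j * α + α) (i.1 * k + k) ∧ c ∉ faultyC}.ncard := by
        rw [Set.ncard_eq_toFinset_card']
        have hsub : ((opB i).filter
            (fun c => i.1 * k + j * α ≤ c.1 ∧ c.1 < i.1 * k + j * α + α)) ⊆
            {c : Fin m | i.1 * k + j * α ≤ c.1 ∧
              c.1 < min (i.1 * k + j * α + α) (i.1 * k + k) ∧ c ∉ faultyC}.toFinset := by
          intro c hc
          simp only [hopB, hblock, Finset.mem_filter, Finset.mem_univ, true_and] at hc
          simp only [Set.mem_toFinset, Set.mem_setOf_eq]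
          obtain ⟨⟨⟨hb1, hb2⟩, hop⟩, hw1, hw2⟩ := hc
          exact ⟨hw1, by omega, hop⟩
        have := Finset.card_le_card hsub
        omega
      obtain ⟨a, b, h1, h2, h3, h4, h5, h6, h7⟩ :=
        window_good faultyC β α (i.1 * k + j * α)
          (min (i.1 * k + j * α + α) (i.1 * k + k)) (by omega) (by omega) hcount
      exact ⟨a, b, by omega, by omega, h3, h4, h5, h6, h7⟩
    have hcover : opB i ⊆ (Finset.range (k / α + 1)).biUnion (fun j => (opB i).filter
        (fun c => i.1 * k + j * α ≤ c.1 ∧ c.1 < i.1 * k + j * α + α)) := by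
      intro c hc
      have hcmem := hc
      simp only [hopB, hblock, Finset.mem_filter, Finset.mem_univ, true_and] at hcmem
      obtain ⟨⟨hb1, hb2⟩, hop⟩ := hcmem
      refine Finset.mem_biUnion.mpr ⟨(c.1 - i.1 * k) / α, ?_, ?_⟩
      · simp only [Finset.mem_range]
        have : (c.1 - i.1 * k) / α ≤ k / α := Nat.div_le_div_right (by omega)
        omega
      · simp only [Finset.mem_filter]
        have e1 : (c.1 - i.1 * k) / α * α ≤ c.1 - i.1 * k := Nat.div_mul_le_self _ α
        have e2 : c.1 - i.1 * k < (c.1 - i.1 * k) / α * α + α := Nat.lt_div_mul_add hαpos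
        exact ⟨hc, by omega, by omega⟩
    calc (opB i).card ≤ _ := Finset.card_le_card hcover
    _ ≤ ∑ j ∈ Finset.range (k / α + 1), ((opB i).filter
        (fun c => i.1 * k + j * α ≤ c.1 ∧ c.1 < i.1 * k + j * α + α)).card :=
      Finset.card_biUnion_le
    _ ≤ ∑ _j ∈ Finset.range (k / α + 1), (β - 1) := Finset.sum_le_sum (fun j _ => hwin j)
    _ = (β - 1) * (k / α + 1) := by rw [Finset.sum_const, Finset.card_range]; ring
  -- dormant set
  set dormF : Finset (Fin n) := Finset.univ.filter (fun i => i ∉ faultyP ∧ ¬ good i) with hdormF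
  set activeF : Finset (Fin n) := Finset.univ.filter (fun i => i ∉ faultyP ∧ good i) with hactiveF
  -- disjointness of faulty-cell blocks and counting
  have hdisj : ∀ i ∈ dormF, ∀ i' ∈ dormF, i ≠ i' → Disjoint (fB i) (fB i') := by
    intro i _ i' _ hne
    rw [Finset.disjoint_left]
    intro c hc hc'
    simp only [hfB, hblock, Finset.mem_filter, Finset.mem_univ, true_and] at hc hc'
    have hvne : i.1 ≠ i'.1 := fun h => hne (Fin.ext h)
    rcases Nat.lt_or_ge i.1 i'.1 with h | h
    · have : (i.1 + 1) * k ≤ i'.1 * k := Nat.mul_le_mul_right k h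
      nlinarith [hc.1.2, hc'.1.1]
    · have h' : i'.1 < i.1 := by omega
      have : (i'.1 + 1) * k ≤ i.1 * k := Nat.mul_le_mul_right k h'
      nlinarith [hc'.1.2, hc.1.1]
  have hsum_fB : ∑ i ∈ dormF, (fB i).card ≤ faultyC.ncard := by
    rw [← Finset.card_biUnion hdisj, Set.ncard_eq_toFinset_card']
    apply Finset.card_le_card
    intro c hc
    simp only [Finset.mem_biUnion] at hc
    obtain ⟨i, _, hci⟩ := hc
    simp only [hfB, Finset.mem_filter] at hci
    simp only [Set.mem_toFinset]
    exact hci.2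
  -- the key counting inequality over naturals
  have hkey : dormF.card * k ≤ dormF.card * ((β - 1) * (k / α + 1)) + faultyC.ncard := by
    have h1 : ∑ i ∈ dormF, k ≤ ∑ i ∈ dormF, ((β - 1) * (k / α + 1) + (fB i).card) := by
      apply Finset.sum_le_sum
      intro i hi
      simp only [hdormF, Finset.mem_filter] at hi
      have := hdorm i hi.2.2
      have := hsplit i
      omega
    rw [Finset.sum_const, Finset.sum_add_distrib, Finset.sum_const, smul_eq_mul,
      smul_eq_mul] at h1
    omega
  -- cardinality bookkeeping
  have hcardP : (Finset.univ.filter (fun i : Fin n => i ∈ faultyP)).card = faultyP.ncard := by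
    rw [Set.ncard_eq_toFinset_card']
    congr 1
    ext i; simp
  have hcards : activeF.card + dormF.card + faultyP.ncard = n := by
    have h1 : (Finset.univ.filter (fun i : Fin n => i ∈ faultyP)).card +
        (Finset.univ.filter (fun i : Fin n => i ∉ faultyP)).card = n := by
      rw [Finset.card_filter_add_card_filter_not, Finset.card_univ, Fintype.card_fin]
    have h2 : ((Finset.univ.filter (fun i : Fin n => i ∉ faultyP)).filter good).card +
        ((Finset.univ.filter (fun i : Fin n => i ∉ faultyP)).filter (fun i => ¬ good i)).card =
        (Finset.univ.filter (fun i : Fin n => i ∉ faultyP)).card :=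
      Finset.card_filter_add_card_filter_not (p := good)
    have h3 : (Finset.univ.filter (fun i : Fin n => i ∉ faultyP)).filter good = activeF := by
      rw [hactiveF, Finset.filter_filter]
    have h4 : (Finset.univ.filter (fun i : Fin n => i ∉ faultyP)).filter (fun i => ¬ good i)
        = dormF := by
      rw [hdormF, Finset.filter_filter]
    rw [h3, h4] at h2
    omega
  have hgoal_card : ({i : Fin n | i ∉ faultyP ∧ good i}).ncard = activeF.card := by
    rw [Set.ncard_eq_toFinset_card']
    congr 1
    ext i
    simp [hactiveF]
  rw [show {i : Fin n | i ∉ faultyP ∧ good i} =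
      {i : Fin n | i ∉ faultyP ∧ ∃ a b : Fin m,
        i.1 * k ≤ a.1 ∧ b.1 < i.1 * k + k ∧ a.1 ≤ b.1 ∧ b.1 + 1 - a.1 ≤ α ∧
        a ∉ faultyC ∧ b ∉ faultyC ∧
        ({c : Fin m | a.1 ≤ c.1 ∧ c.1 ≤ b.1 ∧ c ∉ faultyC}.ncard = β)} from rfl] at hgoal_card
  rw [hgoal_card]
  clear_value δ k α
  -- now real arithmetic
  have hDR : (dormF.card : ℝ) * k ≤ (dormF.card : ℝ) * (((β : ℝ) - 1) * (((k / α : ℕ) : ℝ) + 1)) + fs * m := by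
    have h := hkey
    have hcast : ((dormF.card * k : ℕ) : ℝ) ≤ ((dormF.card * ((β - 1) * (k / α + 1)) + faultyC.ncard : ℕ) : ℝ) := by
      exact_mod_cast h
    push_cast at hcast
    have hb1 : ((β - 1 : ℕ) : ℝ) = (β : ℝ) - 1 := by
      have : 1 ≤ β := by omega
      push_cast [this]; ring
    rw [hb1] at hcast
    linarith
  have hqR : (((k / α : ℕ) : ℝ)) + 1 ≤ (k : ℝ) / α + 1 := by
    have := Nat.cast_div_le (α := ℝ) (m := k) (n := α)
    linarith
  have hmR : (m : ℝ) ≤ (n : ℝ) * ((k : ℝ) + 1) := by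
    have : (m : ℝ) < ((n * (k + 1) : ℕ) : ℝ) := by exact_mod_cast hmlt
    push_cast at this
    linarith
  have hkR : (α : ℝ) ≤ (k : ℝ) := by exact_mod_cast hαk
  have hαR : (0 : ℝ) < (α : ℝ) := by exact_mod_cast hαpos
  have hβR : (2 : ℝ) ≤ (β : ℝ) := by exact_mod_cast hβ
  have hnR : (1 : ℝ) ≤ (n : ℝ) := by exact_mod_cast hn
  set r : ℝ := (k : ℝ) / α with hr
  have hrα : r * α = k := div_mul_cancel₀ _ (ne_of_gt hαR)
  have hr1 : 1 ≤ r := by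
    rw [hr, le_div_iff₀ hαR]; linarith
  clear_value r
  set X : ℝ := (k : ℝ) - ((β : ℝ) - 1) * (r + 1) with hX
  clear_value X
  have hXpos : 0 < X := by
    rw [hX]
    nlinarith [mul_pos (lt_of_lt_of_le zero_lt_one hr1) hαR]
  set T : ℝ := (n : ℝ) * (δ + 2 * fs) / 2 with hT
  clear_value T
  have hDX : (dormF.card : ℝ) * X ≤ fs * ((n : ℝ) * ((k : ℝ) + 1)) := by
    have hD0 : (0 : ℝ) ≤ (dormF.card : ℝ) := Nat.cast_nonneg _
    have hqr : (dormF.card : ℝ) * (((β : ℝ) - 1) * (((k / α : ℕ) : ℝ) + 1)) ≤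
        (dormF.card : ℝ) * (((β : ℝ) - 1) * (r + 1)) := by
      apply mul_le_mul_of_nonneg_left _ hD0
      apply mul_le_mul_of_nonneg_left _ (by linarith)
      linarith
    have hfsm : fs * m ≤ fs * ((n : ℝ) * ((k : ℝ) + 1)) :=
      mul_le_mul_of_nonneg_left hmR (le_of_lt hfs)
    rw [hX]
    nlinarith
  have hXT : fs * ((n : ℝ) * ((k : ℝ) + 1)) ≤ X * T := by
    rw [hX, hT]
    have key : 2 * fs * (r * α + 1) ≤ (r * α - ((β:ℝ) - 1) * (r + 1)) * (δ + 2 * fs) := by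
      nlinarith [mul_nonneg (sub_nonneg.mpr hr1) (mul_nonneg (by linarith : (0:ℝ) ≤ (β:ℝ) - 1) (by linarith : (0:ℝ) ≤ δ + 2*fs)),
        mul_nonneg (sub_nonneg.mpr hr1) (by linarith : (0:ℝ) ≤ fs),
        mul_le_mul_of_nonneg_left hαδ (by linarith : (0:ℝ) ≤ r),
        mul_nonneg (by linarith : (0:ℝ) ≤ (β:ℝ) - 1) (mul_nonneg (by linarith : (0:ℝ) ≤ r + 1) (by linarith : (0:ℝ) ≤ 2 - (δ + 2*fs)))]
    have hn0 : (0:ℝ) < (n:ℝ) := by linarith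
    rw [hrα] at key
    have hmul := mul_le_mul_of_nonneg_left key (le_of_lt hn0)
    linarith
  have hD : (dormF.card : ℝ) ≤ T := by
    have := hDX.trans hXT
    exact le_of_mul_le_mul_right (by linarith [mul_comm (dormF.card : ℝ) X]) hXpos
  -- finish
  have hcardsR : (activeF.card : ℝ) + dormF.card + faultyP.ncard = n := by
    exact_mod_cast hcards
  rw [hT] at hD
  subst hδdef
  linarith
end

section
/- Each phase of the conversion procedure preserves the in-order sequence of nodes: if the list before a phase, read left to right with each tree replaced by its in-order traversal, equals a sequence s, then the same holds after the phase. -/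
/-- Binary trees with labels at the nodes. -/
inductive BT (α : Type) : Type
  | nil : BT α
  | node : BT α → α → BT α → BT α

namespace BT

/-- In-order traversal: left subtree, root, right subtree. -/
def inorder {α : Type} : BT α → List α
  | nil => []
  | node l a r => inorder l ++ a :: inorder r

/-- One phase of the conversion procedure: the list of trees is partitioned into
consecutive quadruples `(T₁, v₁, T₂, v₂)` (some items possibly missing at the end);
`T₁` becomes the left child of the single node `v₁` and `T₂` its right child, and `v₂`
remains a separate list item. -/
def phase {α : Type} : List (BT α) → List (BT α)
  | t₁ :: node _ a _ :: t₂ :: v₂ :: rest => node t₁ a t₂ :: v₂ :: phase rest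
  | [t₁, node _ a _, t₂] => [node t₁ a t₂]
  | [t₁, node _ a _] => [node t₁ a nil]
  | l => l

end BT

open BT in
/-- Each phase of the conversion procedure preserves the in-order sequence of nodes:
reading the list left to right with each tree replaced by its in-order traversal gives
the same sequence before and after the phase.  (The items at odd positions of the list,
which serve as the joining nodes `v₁`, `v₂`, are single nodes.) -/
theorem stmt10 {α : Type} (l : List (BT α))
    (hodd : ∀ i : ℕ, ∀ h : i < l.length, i % 2 = 1 →
      ∃ a : α, l.get ⟨i, h⟩ = BT.node BT.nil a BT.nil) :
    ((phase l).map inorder).flatten = (l.map inorder).flatten := by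
  induction l using BT.phase.induct with
  | case1 t₁ L a R t₂ v₂ rest ih =>
    have h1 : (1 : ℕ) < (t₁ :: node L a R :: t₂ :: v₂ :: rest).length := by
      simp
    obtain ⟨b, hb⟩ := hodd 1 h1 rfl
    simp only [List.get] at hb
    injection hb with hL hab hR
    subst hL hab hR
    have ih' := ih (by
      intro i h hi
      have := hodd (i + 4) (by simpa using by omega) (by omega)
      simpa using this)
    simp only [phase, List.map, List.flatten, inorder]
    rw [ih']
    simp
  | case2 t₁ L a R t₂ =>
    obtain ⟨b, hb⟩ := hodd 1 (by simp) rfl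
    simp only [List.get] at hb
    injection hb with hL hab hR
    subst hL hab hR
    simp [phase, inorder]
  | case3 t₁ L a R =>
    obtain ⟨b, hb⟩ := hodd 1 (by simp) rfl
    simp only [List.get] at hb
    injection hb with hL hab hR
    subst hL hab hR
    simp [phase, inorder]
  | case4 l h1 h2 h3 =>
    match l, h1, h2, h3, hodd with
    | [], _, _, _, _ => rfl
    | [t], _, _, _, _ => rfl
    | t :: u :: rest, h1, h2, h3, hodd =>
      obtain ⟨b, hb⟩ := hodd 1 (by simp) rfl
      simp only [List.get] at hb
      subst hb
      match rest, h1, h2, h3 with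
      | [], _, _, h3 => exact absurd rfl (h3 t nil b nil)
      | [x], _, h2, _ => exact absurd rfl (h2 t nil b nil x)
      | x :: y :: r, h1, _, _ => exact absurd rfl (h1 t nil b nil x y r)
end
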